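/- Let I ⊆ ℝ be an interval and γ : I → ℝ² a unit-speed curve of class C³, and for s, t ∈ I set Z(s,t) := (κ(s)/2)·‖γ(s) − γ(t)‖² − ⟨γ(s) − γ(t), ν(s)⟩. Then for every s in the interior of I, the function t ↦ Z(s,t) satisfies Z(s,s) = 0, (∂Z/∂t)(s,t)|_{t=s} = 0, (∂²Z/∂t²)(s,t)|_{t=s} = 0, and (∂³Z/∂t³)(s,t)|_{t=s} = −κ'(s). -/

import Mathlib

/-!
Along `t ↦ γ(s) − γ(t)`, whose derivatives are `−γ', −γ'', −γ'''` and which vanishes at `t = s`,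
the derivatives of `Z(s, ·)` at `t = s` are `⟨γ', ν⟩ = 0`, `κ‖γ'‖² + ⟨γ'', ν⟩ = κ − κ = 0` and
`3κ⟨γ', γ''⟩ + ⟨γ''', ν⟩`. Unit speed gives `⟨γ', γ''⟩ = 0`, and differentiating `κ = −⟨γ'', ν⟩`
gives `κ' = −⟨γ''', ν⟩`, since `ν'` is `γ''` turned by a right angle and so `⟨γ'', ν'⟩ = 0`.
-/

open Real Set

noncomputable section

/-- The second derivative of a plane curve, componentwise. -/
def d2 (γ : ℝ → ℝ × ℝ) (s : ℝ) : ℝ × ℝ :=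
  (deriv (fun u => (deriv γ u).1) s, deriv (fun u => (deriv γ u).2) s)

/-- The outward unit normal `ν(s) = (γ'₂(s), −γ'₁(s))` of a unit-speed plane curve. -/
def nor (γ : ℝ → ℝ × ℝ) (s : ℝ) : ℝ × ℝ := ((deriv γ s).2, -(deriv γ s).1)

/-- The geodesic curvature `κ(s) = γ'₁(s)·γ''₂(s) − γ'₂(s)·γ''₁(s)` of a unit-speed
plane curve. -/
def curv (γ : ℝ → ℝ × ℝ) (s : ℝ) : ℝ :=
  (deriv γ s).1 * (d2 γ s).2 - (deriv γ s).2 * (d2 γ s).1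

/-- Euclidean inner product on `ℝ²`. -/
def dot (v w : ℝ × ℝ) : ℝ := v.1 * w.1 + v.2 * w.2

/-- Squared Euclidean norm on `ℝ²`. -/
def nsq (v : ℝ × ℝ) : ℝ := v.1 ^ 2 + v.2 ^ 2

section Prod

variable {𝕜 E F : Type*} [NontriviallyNormedField 𝕜] [NormedAddCommGroup E] [NormedSpace 𝕜 E]
  [NormedAddCommGroup F] [NormedSpace 𝕜 F] {f : 𝕜 → E × F} {f' : E × F} {x : 𝕜}

theorem HasDerivAt.fst (h : HasDerivAt f f' x) : HasDerivAt (fun x => (f x).1) f'.1 x := by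
  simpa using h.hasFDerivAt.fst.hasDerivAt

theorem HasDerivAt.snd (h : HasDerivAt f f' x) : HasDerivAt (fun x => (f x).2) f'.2 x := by
  simpa using h.hasFDerivAt.snd.hasDerivAt

end Prod

section Calculus

variable {u v : ℝ → ℝ × ℝ} {u' v' : ℝ × ℝ} {t : ℝ}

theorem hasDerivAt_dot (hu : HasDerivAt u u' t) (hv : HasDerivAt v v' t) :
    HasDerivAt (fun t => dot (u t) (v t)) (dot u' (v t) + dot (u t) v') t := by
  refine ((hu.fst.mul hv.fst).add (hu.snd.mul hv.snd)).congr_deriv ?_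
  simp only [dot]
  ring

theorem nsq_eq_dot (v : ℝ × ℝ) : nsq v = dot v v := by
  simp only [nsq, dot]
  ring

theorem hasDerivAt_nsq (hu : HasDerivAt u u' t) :
    HasDerivAt (fun t => nsq (u t)) (2 * dot (u t) u') t := by
  simp only [nsq_eq_dot]
  refine (hasDerivAt_dot hu hu).congr_deriv ?_
  simp only [dot]
  ring

end Calculus

section PlaneCurve

variable {γ : ℝ → ℝ × ℝ} {s : ℝ}

theorem d2_eq_deriv_deriv (h : DifferentiableAt ℝ (deriv γ) s) : d2 γ s = deriv (deriv γ) s :=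
  Prod.ext h.hasDerivAt.fst.deriv h.hasDerivAt.snd.deriv

theorem dot_deriv_nor (γ : ℝ → ℝ × ℝ) (s : ℝ) : dot (deriv γ s) (nor γ s) = 0 := by
  simp only [dot, nor]
  ring

theorem curv_eq_neg_dot_nor (h : DifferentiableAt ℝ (deriv γ) s) :
    curv γ s = -dot (deriv (deriv γ) s) (nor γ s) := by
  simp only [curv, dot, nor, d2_eq_deriv_deriv h]
  ring

theorem hasDerivAt_nor {a : ℝ × ℝ} (h : HasDerivAt (deriv γ) a s) :
    HasDerivAt (nor γ) (a.2, -a.1) s :=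
  h.snd.prodMk h.fst.neg

theorem hasDerivAt_curv (h₁ : Differentiable ℝ (deriv γ))
    (h₂ : DifferentiableAt ℝ (deriv (deriv γ)) s) :
    HasDerivAt (curv γ) (-dot (deriv (deriv (deriv γ)) s) (nor γ s)) s := by
  have hκ : curv γ = fun u => -dot (deriv (deriv γ) u) (nor γ u) :=
    funext fun u => curv_eq_neg_dot_nor (h₁ u)
  rw [hκ]
  refine (hasDerivAt_dot h₂.hasDerivAt (hasDerivAt_nor (h₁ s).hasDerivAt)).neg.congr_deriv ?_
  simp only [dot]
  ring

theorem dot_deriv_deriv_eq_zero_of_unit_speed {a : ℝ × ℝ}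
    (hunit : ∀ᶠ u in nhds s, nsq (deriv γ u) = 1) (h : HasDerivAt (deriv γ) a s) :
    dot (deriv γ s) a = 0 := by
  have hconst : HasDerivAt (fun u => nsq (deriv γ u)) 0 s :=
    (hasDerivAt_const s (1 : ℝ)).congr_of_eventuallyEq hunit
  have := (hasDerivAt_nsq h).unique hconst
  linarith

end PlaneCurve

section Chord

variable {γ : ℝ → ℝ × ℝ} {a n : ℝ × ℝ} {k : ℝ}

theorem deriv_chord (h₀ : Differentiable ℝ γ) :
    deriv (fun t => k / 2 * nsq (a - γ t) - dot (a - γ t) n) =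
      fun t => dot (deriv γ t) n - k * dot (a - γ t) (deriv γ t) := by
  funext t
  have hδ := (h₀ t).hasDerivAt.const_sub a
  refine ((((hasDerivAt_nsq hδ).const_mul (k / 2)).sub
    (hasDerivAt_dot hδ (hasDerivAt_const t n))).congr_deriv ?_).deriv
  simp only [dot, Prod.fst_neg, Prod.snd_neg, Prod.fst_zero, Prod.snd_zero]
  ring

theorem deriv_deriv_chord (h₀ : Differentiable ℝ γ) (h₁ : Differentiable ℝ (deriv γ)) :
    deriv (fun t => dot (deriv γ t) n - k * dot (a - γ t) (deriv γ t)) =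
      fun t => dot (deriv (deriv γ) t) n - k * (dot (a - γ t) (deriv (deriv γ) t) -
        nsq (deriv γ t)) := by
  funext t
  have hδ := (h₀ t).hasDerivAt.const_sub a
  have hγ' := (h₁ t).hasDerivAt
  refine (((hasDerivAt_dot hγ' (hasDerivAt_const t n)).sub
    ((hasDerivAt_dot hδ hγ').const_mul k)).congr_deriv ?_).deriv
  simp only [dot, nsq, Prod.fst_neg, Prod.snd_neg, Prod.fst_zero, Prod.snd_zero]
  ring

theorem deriv_deriv_deriv_chord (h₀ : Differentiable ℝ γ) (h₁ : Differentiable ℝ (deriv γ))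
    (h₂ : Differentiable ℝ (deriv (deriv γ))) (t : ℝ) :
    deriv (fun t => dot (deriv (deriv γ) t) n - k * (dot (a - γ t) (deriv (deriv γ) t) -
        nsq (deriv γ t))) t =
      dot (deriv (deriv (deriv γ)) t) n - k * (dot (a - γ t) (deriv (deriv (deriv γ)) t) -
        3 * dot (deriv γ t) (deriv (deriv γ) t)) := by
  have hδ := (h₀ t).hasDerivAt.const_sub a
  have hγ' := (h₁ t).hasDerivAt
  have hγ'' := (h₂ t).hasDerivAt
  refine (((hasDerivAt_dot hγ'' (hasDerivAt_const t n)).sub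
    (((hasDerivAt_dot hδ hγ'').sub (hasDerivAt_nsq hγ')).const_mul k)).congr_deriv ?_).deriv
  simp only [dot, Prod.fst_neg, Prod.snd_neg, Prod.fst_zero, Prod.snd_zero]
  ring

end Chord

theorem stmt1_general (I : Set ℝ) (γ : ℝ → ℝ × ℝ)
    (hsm : ContDiff ℝ 3 γ)
    (hunit : ∀ s ∈ I, nsq (deriv γ s) = 1)
    (Z : ℝ → ℝ → ℝ)
    (hZ : ∀ s t, Z s t =
      curv γ s / 2 * nsq (γ s - γ t) - dot (γ s - γ t) (nor γ s)) :
    ∀ s ∈ interior I,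
      Z s s = 0 ∧
      deriv (Z s) s = 0 ∧
      deriv (deriv (Z s)) s = 0 ∧
      deriv (deriv (deriv (Z s))) s = - deriv (curv γ) s := by
  intro s hs
  have h₀ : Differentiable ℝ γ := hsm.differentiable (by norm_num)
  have h₁ : Differentiable ℝ (deriv γ) := (hsm.of_le (by norm_num)).differentiable_deriv_two
  have h₂ : Differentiable ℝ (deriv (deriv γ)) := hsm.deriv'.differentiable_deriv_two
  have hunit_nhds : ∀ᶠ u in nhds s, nsq (deriv γ u) = 1 :=
    Filter.eventually_of_mem (isOpen_interior.mem_nhds hs) fun u hu => hunit u (interior_subset hu)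
  have hZs : Z s = fun t => curv γ s / 2 * nsq (γ s - γ t) - dot (γ s - γ t) (nor γ s) :=
    funext (hZ s)
  rw [hZs, deriv_chord h₀, deriv_deriv_chord h₀ h₁,
    deriv_deriv_deriv_chord h₀ h₁ h₂, (hasDerivAt_curv h₁ (h₂ s)).deriv,
    dot_deriv_deriv_eq_zero_of_unit_speed hunit_nhds (h₁ s).hasDerivAt]
  beta_reduce
  rw [sub_self]
  refine ⟨by simp [nsq, dot], by rw [dot_deriv_nor]; simp [dot], ?_, by simp [dot]⟩
  rw [curv_eq_neg_dot_nor (h₁ s), hunit_nhds.self_of_nhds]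
  simp [dot]

/-- For a unit-speed `C³` curve on an interval `I`, the function
`Z(s,t) = (κ(s)/2)·‖γ(s) − γ(t)‖² − ⟨γ(s) − γ(t), ν(s)⟩` satisfies, for `s` in the
interior of `I`: `Z(s,s) = 0`, `∂Z/∂t(s,s) = 0`, `∂²Z/∂t²(s,s) = 0`, and
`∂³Z/∂t³(s,s) = −κ'(s)`. -/
theorem stmt1 (I : Set ℝ) (hI : Convex ℝ I) (γ : ℝ → ℝ × ℝ)
    (hsm : ContDiff ℝ 3 γ)
    (hunit : ∀ s ∈ I, nsq (deriv γ s) = 1)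
    (Z : ℝ → ℝ → ℝ)
    (hZ : ∀ s t, Z s t =
      curv γ s / 2 * nsq (γ s - γ t) - dot (γ s - γ t) (nor γ s)) :
    ∀ s ∈ interior I,
      Z s s = 0 ∧
      deriv (Z s) s = 0 ∧
      deriv (deriv (Z s)) s = 0 ∧
      deriv (deriv (deriv (Z s))) s = - deriv (curv γ) s :=
  stmt1_general I γ hsm hunit Z hZ

end
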